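/- The class of permutation graphs is closed under Seidel minors: if G is a permutation graph and H is a Seidel minor of G, then H is a permutation graph. -/

import Mathlib

universe u

/-- The Seidel complement of `G` at `v`: adjacency between the open neighborhood of `v`
and the set of vertices different from `v` and not adjacent to `v` is complemented,
all other adjacencies are unchanged. -/
def seidelCompl {V : Type u} (G : SimpleGraph V) (v : V) : SimpleGraph V where
  Adj x y := x ≠ y ∧
    Xor' (G.Adj x y)
      ((G.Adj v x ∧ ¬ G.Adj v y ∧ y ≠ v) ∨ (G.Adj v y ∧ ¬ G.Adj v x ∧ x ≠ v))
  symm := ⟨by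
    rintro x y ⟨hxy, h⟩
    refine ⟨hxy.symm, ?_⟩
    have h1 : G.Adj x y ↔ G.Adj y x := G.adj_comm x y
    unfold Xor' at h ⊢
    rw [← h1, or_comm]; exact h⟩
  loopless := ⟨fun x h => h.1 rfl⟩

/-- A permutation graph: there are two linear orders on the vertices such that two
distinct vertices are adjacent iff the two orders disagree on them. -/
def IsPermutationGraph {V : Type u} (G : SimpleGraph V) : Prop :=
  ∃ O₁ O₂ : LinearOrder V, ∀ u w : V, u ≠ w →
    (G.Adj u w ↔ ((O₁.lt u w ∧ O₂.lt w u) ∨ (O₁.lt w u ∧ O₂.lt u w)))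

/-- `SeidelMinor H G` : a graph isomorphic to `H` can be obtained from `G` by a finite
sequence of Seidel complementations and vertex deletions. -/
inductive SeidelMinor : ∀ {U V : Type u}, SimpleGraph U → SimpleGraph V → Prop
  | iso {U V : Type u} {H : SimpleGraph U} {G : SimpleGraph V} (e : H ≃g G) :
      SeidelMinor H G
  | seidel {U V : Type u} {H : SimpleGraph U} {G : SimpleGraph V} (v : V)
      (h : SeidelMinor H (seidelCompl G v)) : SeidelMinor H G
  | delete {U V : Type u} {H : SimpleGraph U} {G : SimpleGraph V} (v : V)
      (h : SeidelMinor H (G.induce {u : V | u ≠ v})) : SeidelMinor H G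

/-!
Rotating a linear order about `v` (moving everything above `v` below everything below `v`)
reverses the relative order of `x` and `y` exactly when `v` separates them. In a permutation
graph, `v` is adjacent to `x` iff the two orders put `x` on different sides of `v`, so
rotating both orders about `v` reverses the adjacency of `x, y ≠ v` exactly when `v` is
adjacent to one of them, which is the Seidel complement at `v`; the adjacencies at `v`
itself survive because both orders are reversed there. Vertex deletion and isomorphism only
pull the two orders back along an embedding.
-/

namespace LinearOrder

variable {α : Type*}

theorem lt_swap_iff_not_lt (O : LinearOrder α) {x y : α} (h : x ≠ y) :
    O.lt y x ↔ ¬ O.lt x y := by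
  let := O
  exact ⟨lt_asymm, fun hxy => h.lt_or_gt.resolve_left hxy⟩

def rotateKey (O : LinearOrder α) (v x : α) : ℕ :=
  if O.lt v x then 0 else if x = v then 1 else 2

/-- The rotation of `O` about `v`: the elements above `v` are moved below the elements below
`v`, with `v` kept between the two blocks. -/
abbrev rotate (O : LinearOrder α) (v : α) : LinearOrder α :=
  let := O
  lift' (fun x => toLex (O.rotateKey v x, x)) fun _ _ h => congrArg (fun p => (ofLex p).2) h

theorem rotate_lt_iff (O : LinearOrder α) (v x y : α) :
    (O.rotate v).lt x y ↔
      O.rotateKey v x < O.rotateKey v y ∨ O.rotateKey v x = O.rotateKey v y ∧ O.lt x y :=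
  let := O
  Prod.Lex.toLex_lt_toLex

theorem rotate_lt_iff_of_ne {O : LinearOrder α} {v x y : α} (hx : x ≠ v) (hy : y ≠ v) :
    (O.rotate v).lt x y ↔ (O.lt x y ↔ (O.lt v x ↔ O.lt v y)) := by
  let := O
  simp only [rotate_lt_iff, rotateKey, hx, hy, if_false]
  grind

theorem rotate_lt_self_left {O : LinearOrder α} {v x : α} (hx : x ≠ v) :
    (O.rotate v).lt v x ↔ ¬ O.lt v x := by
  let := O
  simp only [rotate_lt_iff, rotateKey, hx, if_false]
  grind

theorem rotate_lt_self_right {O : LinearOrder α} {v x : α} (hx : x ≠ v) :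
    (O.rotate v).lt x v ↔ ¬ O.lt x v := by
  let := O
  simp only [rotate_lt_iff, rotateKey, hx, if_false]
  grind

end LinearOrder

section

variable {V W : Type*}

theorem isPermutationGraph_iff_xor {G : SimpleGraph V} :
    IsPermutationGraph G ↔ ∃ O₁ O₂ : LinearOrder V, ∀ u w : V, u ≠ w →
      (G.Adj u w ↔ Xor (O₁.lt u w) (O₂.lt u w)) := by
  refine exists₂_congr fun O₁ O₂ => forall₂_congr fun u w => forall_congr' fun huw => ?_
  rw [O₁.lt_swap_iff_not_lt huw, O₂.lt_swap_iff_not_lt huw, xor_def, and_comm (a := ¬ _)]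

theorem IsPermutationGraph.comap {H : SimpleGraph W} {G : SimpleGraph V} (f : H ↪g G)
    (hG : IsPermutationGraph G) : IsPermutationGraph H := by
  obtain ⟨O₁, O₂, hO⟩ := hG
  exact ⟨@LinearOrder.lift' _ _ O₁ f f.injective, @LinearOrder.lift' _ _ O₂ f f.injective,
    fun u w huw => f.map_adj_iff.symm.trans (hO _ _ (f.injective.ne huw))⟩

theorem seidelCompl_adj_self_left {G : SimpleGraph V} {v w : V} :
    (seidelCompl G v).Adj v w ↔ G.Adj v w := by
  change v ≠ w ∧ Xor _ _ ↔ _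
  simp only [G.loopless.irrefl, false_and, ne_eq, not_true_eq_false, and_false, or_self,
    xor_comm _ False, xor_false, id]
  exact ⟨And.right, fun h => ⟨h.ne, h⟩⟩

theorem seidelCompl_adj_self_right {G : SimpleGraph V} {v w : V} :
    (seidelCompl G v).Adj w v ↔ G.Adj w v := by
  rw [SimpleGraph.adj_comm, seidelCompl_adj_self_left, G.adj_comm]

theorem seidelCompl_adj_of_ne {G : SimpleGraph V} {v u w : V} (hu : u ≠ v) (hw : w ≠ v) :
    (seidelCompl G v).Adj u w ↔ u ≠ w ∧ Xor (G.Adj u w) (Xor (G.Adj v u) (G.Adj v w)) := by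
  simp only [seidelCompl, hu, hw, ne_eq, not_false_eq_true, and_true]
  rfl

theorem IsPermutationGraph.seidelCompl {G : SimpleGraph V} (hG : IsPermutationGraph G) (v : V) :
    IsPermutationGraph (seidelCompl G v) := by
  rw [isPermutationGraph_iff_xor] at hG ⊢
  obtain ⟨O₁, O₂, hO⟩ := hG
  refine ⟨O₁.rotate v, O₂.rotate v, fun u w huw => ?_⟩
  rcases eq_or_ne u v with rfl | hu
  · rw [seidelCompl_adj_self_left, hO _ _ huw, LinearOrder.rotate_lt_self_left huw.symm,
      LinearOrder.rotate_lt_self_left huw.symm, xor_not_not]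
  rcases eq_or_ne w v with rfl | hw
  · rw [seidelCompl_adj_self_right, hO _ _ huw, LinearOrder.rotate_lt_self_right huw,
      LinearOrder.rotate_lt_self_right huw, xor_not_not]
  rw [seidelCompl_adj_of_ne hu hw, hO _ _ huw, hO _ _ hu.symm, hO _ _ hw.symm,
    LinearOrder.rotate_lt_iff_of_ne hu hw, LinearOrder.rotate_lt_iff_of_ne hu hw]
  simp only [huw, ne_eq, not_false_eq_true, true_and]
  have parity : ∀ a₁ a₂ p₁ p₂ q₁ q₂ : Prop, Xor (Xor a₁ a₂) (Xor (Xor p₁ p₂) (Xor q₁ q₂)) ↔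
      Xor (a₁ ↔ (p₁ ↔ q₁)) (a₂ ↔ (p₂ ↔ q₂)) := by
    grind
  exact parity ..

end

theorem SeidelMinor.isPermutationGraph {U V : Type u} {H : SimpleGraph U} {G : SimpleGraph V}
    (hHG : SeidelMinor H G) (hG : IsPermutationGraph G) : IsPermutationGraph H := by
  induction hHG with
  | iso e => exact hG.comap e.toEmbedding
  | seidel v _ ih => exact ih (hG.seidelCompl v)
  | delete v _ ih => exact ih (hG.comap (SimpleGraph.Embedding.induce _))

theorem isPermutationGraph_of_seidelMinor_general {W V : Type u}
    (G : SimpleGraph V) (H : SimpleGraph W)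
    (hG : IsPermutationGraph G) (hHG : SeidelMinor H G) : IsPermutationGraph H :=
  hHG.isPermutationGraph hG

/-- Permutation graphs are closed under Seidel minors. -/
theorem isPermutationGraph_of_seidelMinor {W V : Type u} [Fintype W] [Fintype V]
    (G : SimpleGraph V) (H : SimpleGraph W)
    (hG : IsPermutationGraph G) (hHG : SeidelMinor H G) : IsPermutationGraph H :=
  isPermutationGraph_of_seidelMinor_general G H hG hHG
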